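/- Strict triangularity of the structure-group elements (property (tri04)). Let (π^(𝐧))_{𝐧∈ℕ²} be a family of elements of R such that, for each 𝐧, the z^γ-coefficient of π^(𝐧) vanishes unless [γ] ≥ 0 and |γ| > |𝐧|, and let Γ be a continuous ℝ-algebra endomorphism of R realizing (π^(𝐧))_{𝐧∈ℕ²}. Then for every multi-index γ: the z^γ-coefficient of Γ(z^γ) equals 1, and for every multi-index β ≠ γ, if the z^β-coefficient of Γ(z^γ) is nonzero then |β| > |γ|. Equivalently, Γ(z^γ) − z^γ is supported on multi-indices β with |β| > |γ|. -/

import Mathlib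

open MvPolynomial

abbrev N2 : Type := {p : ℕ × ℕ // p ≠ (0, 0)}
abbrev Idx : Type := ℕ ⊕ N2
abbrev MIdx : Type := Idx →₀ ℕ
abbrev PS : Type := MvPowerSeries Idx ℝ

noncomputable section

/-- the weight `|𝐧| = w₁ n₁ + w₂ n₂` of `𝐧 ∈ ℕ²`. -/
def wt (w₁ w₂ : ℝ) (n : ℕ × ℕ) : ℝ := w₁ * n.1 + w₂ * n.2

/-- `[γ] = Σ_k k γ(k) − Σ_{𝐧≠0} γ(𝐧)`. -/
def brk (γ : MIdx) : ℤ :=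
  γ.sum fun i n =>
    match i with
    | Sum.inl k => (k : ℤ) * n
    | Sum.inr _ => -(n : ℤ)

/-- `Σ_{𝐦≠0} |𝐦| γ(𝐦)`. -/
def wsum (w₁ w₂ : ℝ) (γ : MIdx) : ℝ :=
  γ.sum fun i n =>
    match i with
    | Sum.inl _ => 0
    | Sum.inr m => wt w₁ w₂ m.1 * n

/-- the homogeneity `|γ| = α([γ]+1) + Σ_{𝐧≠0}|𝐧|γ(𝐧)`. -/
def homdeg (α w₁ w₂ : ℝ) (γ : MIdx) : ℝ := α * ((brk γ : ℝ) + 1) + wsum w₁ w₂ γ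

/-! ### operators on monomials (polynomial level) -/

/-- `D^(0) z^γ = Σ_k (k+1) γ(k) z^{γ - e_k + e_{k+1}}`. -/
def D0mono (γ : MIdx) : MvPolynomial Idx ℝ :=
  γ.sum fun i n =>
    match i with
    | Sum.inl k =>
        (((k + 1) * n : ℕ) : ℝ) •
          monomial (γ - Finsupp.single (Sum.inl k) 1 + Finsupp.single (Sum.inl (k + 1)) 1) 1
    | Sum.inr _ => 0

/-- `D^(𝐧) z^γ = ∂_{z_𝐧} z^γ` for `𝐧 ≠ 0`. -/
def DNmono (m : N2) (γ : MIdx) : MvPolynomial Idx ℝ :=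
  ((γ (Sum.inr m) : ℕ) : ℝ) • monomial (γ - Finsupp.single (Sum.inr m) 1) 1

/-- `D^(𝐧) z^γ` for arbitrary `𝐧 ∈ ℕ²`. -/
def Dmono (n : ℕ × ℕ) (γ : MIdx) : MvPolynomial Idx ℝ :=
  if h : n = (0, 0) then D0mono γ else DNmono ⟨n, h⟩ γ

lemma add10_ne (n : ℕ × ℕ) : n + (1, 0) ≠ (0, 0) := by
  intro h
  exact Nat.succ_ne_zero n.1 (congrArg Prod.fst h)

lemma add01_ne (n : ℕ × ℕ) : n + (0, 1) ≠ (0, 0) := by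
  intro h
  exact Nat.succ_ne_zero n.2 (congrArg Prod.snd h)

def v10 : N2 := ⟨(1, 0), by decide⟩
def v01 : N2 := ⟨(0, 1), by decide⟩

/-- `∂₁ z^γ = z_{(1,0)} D^(0) z^γ + Σ_{𝐧≠0} (n₁+1) z_{𝐧+(1,0)} ∂_{z_𝐧} z^γ`. -/
def d1mono (γ : MIdx) : MvPolynomial Idx ℝ :=
  X (Sum.inr v10) * D0mono γ +
    γ.sum fun i n =>
      match i with
      | Sum.inl _ => 0
      | Sum.inr m =>
          (((m.1.1 + 1) * n : ℕ) : ℝ) •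
            monomial
              (γ - Finsupp.single (Sum.inr m) 1 +
                Finsupp.single (Sum.inr ⟨m.1 + (1, 0), add10_ne m.1⟩) 1) 1

/-- `∂₂ z^γ`. -/
def d2mono (γ : MIdx) : MvPolynomial Idx ℝ :=
  X (Sum.inr v01) * D0mono γ +
    γ.sum fun i n =>
      match i with
      | Sum.inl _ => 0
      | Sum.inr m =>
          (((m.1.2 + 1) * n : ℕ) : ℝ) •
            monomial
              (γ - Finsupp.single (Sum.inr m) 1 +
                Finsupp.single (Sum.inr ⟨m.1 + (0, 1), add01_ne m.1⟩) 1) 1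

/-! ### operators on power series (coefficientwise) -/

/-- coefficient of `D^(0) f` at `β`. -/
def D0coeff (f : PS) (β : MIdx) : ℝ :=
  ∑ i ∈ β.support,
    match i with
    | Sum.inl (k + 1) =>
        (((k + 1) * (β (Sum.inl k) + 1) : ℕ) : ℝ) *
          MvPowerSeries.coeff
            (β + Finsupp.single (Sum.inl k) 1 - Finsupp.single (Sum.inl (k + 1)) 1) f
    | _ => 0

/-- `D^(0)` on power series. -/
def D0series (f : PS) : PS := D0coeff f

/-- `D^(𝐧) = ∂_{z_𝐧}` on power series, `𝐧 ≠ 0`. -/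
def DNseries (m : N2) (f : PS) : PS :=
  fun β => ((β (Sum.inr m) + 1 : ℕ) : ℝ) *
    MvPowerSeries.coeff (β + Finsupp.single (Sum.inr m) 1) f

/-- `D^(𝐧)` on power series for arbitrary `𝐧 ∈ ℕ²`. -/
def Dseries (n : ℕ × ℕ) (f : PS) : PS :=
  if h : n = (0, 0) then D0series f else DNseries ⟨n, h⟩ f

/-- coefficient of `∂₁ f` at `β`. -/
def d1coeff (f : PS) (β : MIdx) : ℝ :=
  (if 1 ≤ β (Sum.inr v10) then D0coeff f (β - Finsupp.single (Sum.inr v10) 1) else 0) +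
    ∑ i ∈ β.support,
      match i with
      | Sum.inl _ => 0
      | Sum.inr p =>
          if hp : ((p.1.1 - 1, p.1.2) : ℕ × ℕ) ≠ (0, 0) ∧ 1 ≤ p.1.1 then
            (p.1.1 : ℝ) *
              ((((β - Finsupp.single (Sum.inr p) 1 : MIdx) (Sum.inr ⟨(p.1.1 - 1, p.1.2), hp.1⟩) : ℕ) + 1 : ℕ) : ℝ) *
              MvPowerSeries.coeff
                (β - Finsupp.single (Sum.inr p) 1 +
                  Finsupp.single (Sum.inr ⟨(p.1.1 - 1, p.1.2), hp.1⟩) 1) f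
          else 0

/-- `∂₁` on power series. -/
def d1series (f : PS) : PS := d1coeff f

/-- coefficient of `∂₂ f` at `β`. -/
def d2coeff (f : PS) (β : MIdx) : ℝ :=
  (if 1 ≤ β (Sum.inr v01) then D0coeff f (β - Finsupp.single (Sum.inr v01) 1) else 0) +
    ∑ i ∈ β.support,
      match i with
      | Sum.inl _ => 0
      | Sum.inr p =>
          if hp : ((p.1.1, p.1.2 - 1) : ℕ × ℕ) ≠ (0, 0) ∧ 1 ≤ p.1.2 then
            (p.1.2 : ℝ) *
              ((((β - Finsupp.single (Sum.inr p) 1 : MIdx) (Sum.inr ⟨(p.1.1, p.1.2 - 1), hp.1⟩) : ℕ) + 1 : ℕ) : ℝ) *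
              MvPowerSeries.coeff
                (β - Finsupp.single (Sum.inr p) 1 +
                  Finsupp.single (Sum.inr ⟨(p.1.1, p.1.2 - 1), hp.1⟩) 1) f
          else 0

/-- `∂₂` on power series. -/
def d2series (f : PS) : PS := d2coeff f

/-- the operator `z^γ·D^(𝐧)` on power series. -/
def opOf (γ : MIdx) (n : ℕ × ℕ) (f : PS) : PS :=
  MvPowerSeries.monomial γ 1 * Dseries n f

/-- the dual model space `T̃*`. -/
def Ttilde : Set PS := {f | ∀ γ : MIdx, MvPowerSeries.coeff γ f ≠ 0 → 0 ≤ brk γ}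

/-- the dual model space `T*`. -/
def Tstar : Set PS :=
  {f | ∀ γ : MIdx, MvPowerSeries.coeff γ f ≠ 0 →
      0 ≤ brk γ ∨ ∃ m : N2, γ = Finsupp.single (Sum.inr m) 1}

/-! ### topology and the realization property -/

instance : TopologicalSpace PS := inferInstanceAs (TopologicalSpace ((Idx →₀ ℕ) → ℝ))

/-- `Γ` realizes the family `(π^(𝐧))_{𝐧∈ℕ²}`. -/
def Realizes (Γ : PS →ₐ[ℝ] PS) (π : ℕ × ℕ → PS) : Prop :=
  Continuous Γ ∧
    (∀ m : N2, Γ (MvPowerSeries.X (Sum.inr m)) = MvPowerSeries.X (Sum.inr m) + π m.1) ∧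
    (∀ k : ℕ, HasSum
      (fun l : ℕ => ((k + l).choose k : ℝ) • (π (0, 0) ^ l * MvPowerSeries.X (Sum.inl (k + l))))
      (Γ (MvPowerSeries.X (Sum.inl k))))

end

/-!
The weight `γ ↦ |γ| - α` is additive, so the property "coefficient `1` at `z^γ`, every other
monomial of strictly larger weight" is stable under products. The generators have it:
`Γ(z_𝐧) = z_𝐧 + π^(𝐧)` with `π^(𝐧)` living above weight `|𝐧| - α`, and in
`Γ(z_k) = z_k + Σ_{l ≥ 1} binom(k+l, k) (π^(0))^l z_{k+l}` the factor `(π^(0))^l` lowers the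
weight by less than `lα` while `z_{k+l}` weighs `lα` more than `z_k`. Since `Γ` is multiplicative,
`Γ(z^γ) = ∏ Γ(z_i)^γ(i)` inherits the property.
-/

namespace MvPowerSeries

variable {σ R M : Type*} [CommSemiring R] [AddCommMonoid M] [LinearOrder M] (w : (σ →₀ ℕ) →+ M)

def SupportedAbove (c : M) (f : MvPowerSeries σ R) : Prop :=
  ∀ β, coeff β f ≠ 0 → c < w β

def HasUnitLowestTerm (γ : σ →₀ ℕ) (f : MvPowerSeries σ R) : Prop :=
  coeff γ f = 1 ∧ ∀ β, β ≠ γ → coeff β f ≠ 0 → w γ < w β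

variable {w} {f g : MvPowerSeries σ R} {c c' : M} {γ δ : σ →₀ ℕ}

theorem exists_coeff_ne_zero_of_coeff_mul_ne_zero {β : σ →₀ ℕ} (h : coeff β (f * g) ≠ 0) :
    ∃ b e, b + e = β ∧ coeff b f ≠ 0 ∧ coeff e g ≠ 0 := by
  classical
  rw [coeff_mul] at h
  obtain ⟨⟨b, e⟩, hbe, hne⟩ := Finset.exists_ne_zero_of_sum_ne_zero h
  exact ⟨b, e, Finset.HasAntidiagonal.mem_antidiagonal.1 hbe, left_ne_zero_of_mul hne,
    right_ne_zero_of_mul hne⟩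

theorem SupportedAbove.smul (hf : SupportedAbove w c f) (r : R) : SupportedAbove w c (r • f) :=
  fun β hβ => hf β (right_ne_zero_of_mul (by rwa [coeff_smul] at hβ))

theorem HasUnitLowestTerm.le (hf : HasUnitLowestTerm w γ f) {β : σ →₀ ℕ} (hβ : coeff β f ≠ 0) :
    w γ ≤ w β := by
  rcases eq_or_ne β γ with rfl | hne
  · exact le_rfl
  · exact (hf.2 β hne hβ).le

theorem hasUnitLowestTerm_monomial (γ : σ →₀ ℕ) :
    HasUnitLowestTerm w γ (monomial γ (1 : R)) := by
  classical
  refine ⟨coeff_monomial_same γ 1, fun β hβ hne => absurd ?_ hne⟩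
  rw [coeff_monomial, if_neg hβ]

theorem hasUnitLowestTerm_X (i : σ) :
    HasUnitLowestTerm w (Finsupp.single i 1) (X i : MvPowerSeries σ R) :=
  hasUnitLowestTerm_monomial _

theorem HasUnitLowestTerm.add_supportedAbove (hf : HasUnitLowestTerm w γ f)
    (hg : SupportedAbove w (w γ) g) : HasUnitLowestTerm w γ (f + g) := by
  have hgγ : coeff γ g = 0 := by_contra fun h => lt_irrefl _ (hg γ h)
  refine ⟨by rw [map_add, hf.1, hgγ, add_zero], fun β hβ hne => ?_⟩
  by_cases hfβ : coeff β f = 0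
  · exact hg β (by rwa [map_add, hfβ, zero_add] at hne)
  · exact hf.2 β hβ hfβ

theorem hasUnitLowestTerm_one : HasUnitLowestTerm w 0 (1 : MvPowerSeries σ R) := by
  simpa only [monomial_zero_one] using hasUnitLowestTerm_monomial (R := R) (w := w) 0

open scoped WithPiTopology in
theorem HasUnitLowestTerm.of_hasSum [TopologicalSpace R] [T2Space R] {ι : Type*}
    {F : ι → MvPowerSeries σ R} {S : MvPowerSeries σ R} (hS : HasSum F S) (i₀ : ι)
    (h₀ : HasUnitLowestTerm w γ (F i₀)) (hF : ∀ i ≠ i₀, SupportedAbove w (w γ) (F i)) :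
    HasUnitLowestTerm w γ S := by
  rw [WithPiTopology.hasSum_iff_hasSum_coeff] at hS
  refine ⟨?_, fun β hβ hne => ?_⟩
  · have hγ : ∀ i ≠ i₀, coeff γ (F i) = 0 := fun i hi =>
      by_contra fun h => lt_irrefl _ (hF i hi γ h)
    rw [(hS γ).unique (hasSum_single i₀ hγ), h₀.1]
  · obtain ⟨i, hi⟩ : ∃ i, coeff β (F i) ≠ 0 := by
      by_contra! h
      exact hne ((hS β).unique (by simpa only [h] using hasSum_zero))
    rcases eq_or_ne i i₀ with rfl | hii₀
    · exact h₀.2 β hβ hi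
    · exact hF i hii₀ β hi

variable [IsOrderedCancelAddMonoid M]

theorem SupportedAbove.mul (hf : SupportedAbove w c f) (hg : ∀ β, coeff β g ≠ 0 → c' ≤ w β) :
    SupportedAbove w (c + c') (f * g) := by
  intro β hβ
  obtain ⟨b, e, rfl, hb, he⟩ := exists_coeff_ne_zero_of_coeff_mul_ne_zero hβ
  rw [map_add]
  exact add_lt_add_of_lt_of_le (hf b hb) (hg e he)

theorem SupportedAbove.pow_succ (hf : SupportedAbove w c f) (n : ℕ) :
    SupportedAbove w ((n + 1) • c) (f ^ (n + 1)) := by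
  induction n with
  | zero => simpa using hf
  | succ n ih =>
    rw [succ_nsmul, _root_.pow_succ]
    exact ih.mul fun β hβ => (hf β hβ).le

theorem HasUnitLowestTerm.add_lt_add_of_ne (hf : HasUnitLowestTerm w γ f)
    (hg : HasUnitLowestTerm w δ g) {b e : σ →₀ ℕ} (hb : coeff b f ≠ 0) (he : coeff e g ≠ 0)
    (hbe : b ≠ γ ∨ e ≠ δ) : w γ + w δ < w b + w e := by
  rcases hbe with hbγ | heδ
  · exact add_lt_add_of_lt_of_le (hf.2 b hbγ hb) (hg.le he)
  · exact add_lt_add_of_le_of_lt (hf.le hb) (hg.2 e heδ he)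

theorem HasUnitLowestTerm.mul (hf : HasUnitLowestTerm w γ f) (hg : HasUnitLowestTerm w δ g) :
    HasUnitLowestTerm w (γ + δ) (f * g) := by
  classical
  refine ⟨?_, fun β hβ hne => ?_⟩
  · rw [coeff_mul, Finset.sum_eq_single_of_mem (γ, δ)
      (Finset.HasAntidiagonal.mem_antidiagonal.2 rfl), hf.1, hg.1, one_mul]
    rintro ⟨b, e⟩ hbe hne
    by_contra h
    have hlt := hf.add_lt_add_of_ne hg (left_ne_zero_of_mul h) (right_ne_zero_of_mul h)
      (by simpa only [ne_eq, Prod.mk.injEq, not_and_or] using hne)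
    rw [← map_add, ← map_add, Finset.HasAntidiagonal.mem_antidiagonal.1 hbe] at hlt
    exact lt_irrefl _ hlt
  · obtain ⟨b, e, rfl, hb, he⟩ := exists_coeff_ne_zero_of_coeff_mul_ne_zero hne
    rw [map_add, map_add]
    refine hf.add_lt_add_of_ne hg hb he ?_
    by_contra! h
    exact hβ (by rw [h.1, h.2])

theorem HasUnitLowestTerm.pow (hf : HasUnitLowestTerm w γ f) (n : ℕ) :
    HasUnitLowestTerm w (n • γ) (f ^ n) := by
  induction n with
  | zero => simpa using hasUnitLowestTerm_one
  | succ n ih => simpa only [succ_nsmul, _root_.pow_succ] using ih.mul hf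

theorem HasUnitLowestTerm.map_monomial {F : Type*}
    [FunLike F (MvPowerSeries σ R) (MvPowerSeries σ R)]
    [MonoidHomClass F (MvPowerSeries σ R) (MvPowerSeries σ R)] {Γ : F}
    (hΓ : ∀ i, HasUnitLowestTerm w (Finsupp.single i 1) (Γ (X i))) (γ : σ →₀ ℕ) :
    HasUnitLowestTerm w γ (Γ (monomial γ 1)) := by
  induction γ using Finsupp.induction_linear with
  | zero => simpa only [monomial_zero_one, map_one] using hasUnitLowestTerm_one
  | add γ δ hγ hδ =>
    rw [← mul_one (1 : R), ← monomial_mul_monomial, map_mul]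
    exact hγ.mul hδ
  | single i n => simpa only [← X_pow_eq, map_pow, Finsupp.smul_single_one] using (hΓ i).pow n

end MvPowerSeries

open MvPowerSeries

theorem brk_add (β γ : MIdx) : brk (β + γ) = brk β + brk γ := by
  unfold brk
  refine Finsupp.sum_add_index' (by rintro (k | m) <;> simp) ?_
  rintro (k | m) b₁ b₂ <;> push_cast <;> ring

theorem wsum_add (w₁ w₂ : ℝ) (β γ : MIdx) :
    wsum w₁ w₂ (β + γ) = wsum w₁ w₂ β + wsum w₁ w₂ γ := by
  unfold wsum
  refine Finsupp.sum_add_index' (by rintro (k | m) <;> simp) ?_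
  rintro (k | m) b₁ b₂ <;> push_cast <;> ring

noncomputable def shiftedHomdeg (α w₁ w₂ : ℝ) : MIdx →+ ℝ where
  toFun γ := α * brk γ + wsum w₁ w₂ γ
  map_zero' := by simp [brk, wsum]
  map_add' β γ := by rw [brk_add, wsum_add]; push_cast; ring

theorem homdeg_eq_shiftedHomdeg_add (α w₁ w₂ : ℝ) (γ : MIdx) :
    homdeg α w₁ w₂ γ = shiftedHomdeg α w₁ w₂ γ + α := by
  simp only [homdeg, shiftedHomdeg, AddMonoidHom.coe_mk, ZeroHom.coe_mk]
  ring

theorem shiftedHomdeg_single_inl (α w₁ w₂ : ℝ) (k : ℕ) :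
    shiftedHomdeg α w₁ w₂ (Finsupp.single (Sum.inl k) 1) = α * k := by
  simp [shiftedHomdeg, brk, wsum]

theorem shiftedHomdeg_single_inr (α w₁ w₂ : ℝ) (m : N2) :
    shiftedHomdeg α w₁ w₂ (Finsupp.single (Sum.inr m) 1) = wt w₁ w₂ m.1 - α := by
  simp [shiftedHomdeg, brk, wsum, sub_eq_neg_add]

section Realizes

variable {α w₁ w₂ : ℝ} {π : ℕ × ℕ → PS} {Γ : PS →ₐ[ℝ] PS}

theorem hasUnitLowestTerm_map_X_inr (hΓ : Realizes Γ π)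
    (hπ : ∀ m : N2, SupportedAbove (shiftedHomdeg α w₁ w₂) (wt w₁ w₂ m.1 - α) (π m.1)) (m : N2) :
    HasUnitLowestTerm (shiftedHomdeg α w₁ w₂) (Finsupp.single (Sum.inr m) 1)
      (Γ (X (Sum.inr m))) := by
  rw [hΓ.2.1 m]
  refine (hasUnitLowestTerm_X _).add_supportedAbove ?_
  rw [shiftedHomdeg_single_inr]
  exact hπ m

theorem hasUnitLowestTerm_map_X_inl (hΓ : Realizes Γ π)
    (hπ₀ : SupportedAbove (shiftedHomdeg α w₁ w₂) (-α) (π (0, 0))) (k : ℕ) :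
    HasUnitLowestTerm (shiftedHomdeg α w₁ w₂) (Finsupp.single (Sum.inl k) 1)
      (Γ (X (Sum.inl k))) := by
  refine HasUnitLowestTerm.of_hasSum (hΓ.2.2 k) 0 ?_ fun l hl => ?_
  · simpa using hasUnitLowestTerm_X (R := ℝ) (w := shiftedHomdeg α w₁ w₂) (Sum.inl k)
  · obtain ⟨l, rfl⟩ := Nat.exists_eq_succ_of_ne_zero hl
    refine SupportedAbove.smul ?_ _
    convert (hπ₀.pow_succ l).mul fun β hβ => (hasUnitLowestTerm_X (Sum.inl (k + (l + 1)))).le hβ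
      using 1
    rw [shiftedHomdeg_single_inl, shiftedHomdeg_single_inl]
    push_cast
    ring

end Realizes

theorem stmt19_general (α w₁ w₂ : ℝ)
    (π : ℕ × ℕ → PS)
    (hπ : ∀ (n : ℕ × ℕ) (γ : MIdx), MvPowerSeries.coeff γ (π n) ≠ 0 →
        0 ≤ brk γ ∧ wt w₁ w₂ n < homdeg α w₁ w₂ γ)
    (Γ : PS →ₐ[ℝ] PS) (hΓ : Realizes Γ π) (γ : MIdx) :
    MvPowerSeries.coeff γ (Γ (MvPowerSeries.monomial γ 1)) = 1 ∧
      ∀ β : MIdx, β ≠ γ →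
        MvPowerSeries.coeff β (Γ (MvPowerSeries.monomial γ 1)) ≠ 0 →
          homdeg α w₁ w₂ γ < homdeg α w₁ w₂ β := by
  have hπ' (n : ℕ × ℕ) : SupportedAbove (shiftedHomdeg α w₁ w₂) (wt w₁ w₂ n - α) (π n) :=
    fun β hβ => by linarith [(hπ n β hβ).2, homdeg_eq_shiftedHomdeg_add α w₁ w₂ β]
  have hX : ∀ i : Idx,
      HasUnitLowestTerm (shiftedHomdeg α w₁ w₂) (Finsupp.single i 1) (Γ (X i)) := by
    rintro (k | m)
    · exact hasUnitLowestTerm_map_X_inl hΓ (by simpa [wt] using hπ' (0, 0)) k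
    · exact hasUnitLowestTerm_map_X_inr hΓ (fun m => hπ' m.1) m
  obtain ⟨hγ, hβ⟩ := HasUnitLowestTerm.map_monomial hX γ
  refine ⟨hγ, fun β hne hβ' => ?_⟩
  rw [homdeg_eq_shiftedHomdeg_add, homdeg_eq_shiftedHomdeg_add]
  linarith [hβ β hne hβ']

/-- **Strict triangularity of the structure-group elements** (property (tri04)). -/
theorem stmt19 (α w₁ w₂ : ℝ) (hα : 0 < α) (hw₁ : 0 < w₁) (hw₂ : 0 < w₂)
    (π : ℕ × ℕ → PS)
    (hπ : ∀ (n : ℕ × ℕ) (γ : MIdx), MvPowerSeries.coeff γ (π n) ≠ 0 →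
        0 ≤ brk γ ∧ wt w₁ w₂ n < homdeg α w₁ w₂ γ)
    (Γ : PS →ₐ[ℝ] PS) (hΓ : Realizes Γ π) (γ : MIdx) :
    MvPowerSeries.coeff γ (Γ (MvPowerSeries.monomial γ 1)) = 1 ∧
      ∀ β : MIdx, β ≠ γ →
        MvPowerSeries.coeff β (Γ (MvPowerSeries.monomial γ 1)) ≠ 0 →
          homdeg α w₁ w₂ γ < homdeg α w₁ w₂ β :=
  stmt19_general α w₁ w₂ π hπ Γ hΓ γ
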